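/- Let f be a continuous map on the closed unit disk whose restriction to the open disk D satisfies the AS condition with a modulus δ = δ(ε,t) valid for points in D. Then for all x, a, b on the unit circle S¹ contained in a ball of radius δ(ε,t) with |x−a|/|x−b| ≤ t, one has |f(x)−f(a)|/|f(x)−f(b)| ≤ (1+ε)t, provided f is injective on the closed disk. -/

import Mathlib

/-!
Scaling by `r ∈ (0, 1)` moves a triple of points of the closed disk into the open disk while
keeping the points distinct, keeping them in a common ball of the same radius (centred at `r • c`)
and leaving the ratio `|x - a| / |x - b|` unchanged, so the AS inequality holds at `r • x, r • a,
r • b`. As `r → 1⁻` the image ratios converge by continuity of `f`; injectivity keeps the limiting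
denominator `|f x - f b|` nonzero.
-/

open Filter Topology Metric Set

section RadialApproximation

variable {E : Type*} [NormedAddCommGroup E] [NormedSpace ℝ E]

lemma smul_mem_ball_zero_one {r : ℝ} (hr : r ∈ Ioo (0 : ℝ) 1) {z : E}
    (hz : z ∈ closedBall (0 : E) 1) : r • z ∈ ball (0 : E) 1 := by
  rw [mem_ball_zero_iff, norm_smul, Real.norm_of_nonneg hr.1.le]
  exact (mul_le_of_le_one_right hr.1.le (mem_closedBall_zero_iff.mp hz)).trans_lt hr.2

lemma smul_mem_ball_smul {r : ℝ} (hr : |r| ≤ 1) {z c : E} {ρ : ℝ} (hz : z ∈ ball c ρ) :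
    r • z ∈ ball (r • c) ρ := by
  rw [mem_ball, dist_smul₀, Real.norm_eq_abs]
  exact (mul_le_of_le_one_left dist_nonneg hr).trans_lt hz

lemma dist_smul_div_dist_smul {r : ℝ} (hr : r ≠ 0) (x a b : E) :
    dist (r • x) (r • a) / dist (r • x) (r • b) = dist x a / dist x b := by
  simp only [dist_smul₀]
  exact mul_div_mul_left _ _ (norm_ne_zero_iff.mpr hr)

lemma tendsto_smul_nhdsLT_one {z : E} (hz : z ∈ closedBall (0 : E) 1) :
    Tendsto (fun r : ℝ => r • z) (𝓝[<] 1) (𝓝[closedBall (0 : E) 1] z) := by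
  apply tendsto_nhdsWithin_of_tendsto_nhds_of_eventually_within
  · have h : Tendsto (fun r : ℝ => r • z) (𝓝 1) (𝓝 z) := by
      simpa only [one_smul, id] using (tendsto_id (x := 𝓝 (1 : ℝ))).smul_const z
    exact h.mono_left nhdsWithin_le_nhds
  · filter_upwards [Ioo_mem_nhdsLT one_pos] with r hr
    exact ball_subset_closedBall (smul_mem_ball_zero_one hr hz)

lemma tendsto_dist_div_dist_comp_smul {F : Type*} [MetricSpace F] {f : E → F}
    (hf : ContinuousOn f (closedBall (0 : E) 1)) {x a b : E} (hx : x ∈ closedBall (0 : E) 1)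
    (ha : a ∈ closedBall (0 : E) 1) (hb : b ∈ closedBall (0 : E) 1) (hfxb : f x ≠ f b) :
    Tendsto (fun r : ℝ => dist (f (r • x)) (f (r • a)) / dist (f (r • x)) (f (r • b)))
      (𝓝[<] 1) (𝓝 (dist (f x) (f a) / dist (f x) (f b))) := by
  have hfx := (hf x hx).tendsto.comp (tendsto_smul_nhdsLT_one hx)
  have hfa := (hf a ha).tendsto.comp (tendsto_smul_nhdsLT_one ha)
  have hfb := (hf b hb).tendsto.comp (tendsto_smul_nhdsLT_one hb)
  exact (hfx.dist hfa).div (hfx.dist hfb) (dist_ne_zero.mpr hfxb)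

end RadialApproximation

theorem as_boundary_extension_general (f : ℂ → ℂ)
    (hf_cont : ContinuousOn f (closedBall (0:ℂ) 1))
    (hf_inj : Set.InjOn f (closedBall (0:ℂ) 1))
    (δ : ℝ → ℝ → ℝ)
    (hAS : ∀ ε > (0:ℝ), ∀ t > (0:ℝ),
      ∀ x ∈ ball (0:ℂ) 1, ∀ a ∈ ball (0:ℂ) 1, ∀ b ∈ ball (0:ℂ) 1,
        x ≠ a → x ≠ b → a ≠ b →
        (∃ c : ℂ, x ∈ ball c (δ ε t) ∧ a ∈ ball c (δ ε t) ∧ b ∈ ball c (δ ε t)) →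
        dist x a / dist x b ≤ t →
        dist (f x) (f a) / dist (f x) (f b) ≤ (1 + ε) * t) :
    ∀ ε > (0:ℝ), ∀ t > (0:ℝ),
      ∀ x ∈ sphere (0:ℂ) 1, ∀ a ∈ sphere (0:ℂ) 1, ∀ b ∈ sphere (0:ℂ) 1,
        x ≠ a → x ≠ b → a ≠ b →
        (∃ c : ℂ, x ∈ ball c (δ ε t) ∧ a ∈ ball c (δ ε t) ∧ b ∈ ball c (δ ε t)) →
        dist x a / dist x b ≤ t →
        dist (f x) (f a) / dist (f x) (f b) ≤ (1 + ε) * t := by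
  intro ε hε t ht x hx a ha b hb hxa hxb hab ⟨c, hxc, hac, hbc⟩ hrat
  replace hx := sphere_subset_closedBall hx
  replace ha := sphere_subset_closedBall ha
  replace hb := sphere_subset_closedBall hb
  refine le_of_tendsto
    (tendsto_dist_div_dist_comp_smul hf_cont hx ha hb fun h => hxb (hf_inj hx hb h)) ?_
  filter_upwards [Ioo_mem_nhdsLT one_pos] with r hr
  have hr_ne : r ≠ 0 := hr.1.ne'
  have hr_le : |r| ≤ 1 := abs_le.mpr ⟨by linarith [hr.1], hr.2.le⟩
  have hsmul_inj := smul_right_injective ℂ hr_ne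
  exact hAS ε hε t ht _ (smul_mem_ball_zero_one hr hx) _ (smul_mem_ball_zero_one hr ha)
    _ (smul_mem_ball_zero_one hr hb) (hsmul_inj.ne hxa) (hsmul_inj.ne hxb) (hsmul_inj.ne hab)
    ⟨r • c, smul_mem_ball_smul hr_le hxc, smul_mem_ball_smul hr_le hac,
      smul_mem_ball_smul hr_le hbc⟩
    (by rwa [dist_smul_div_dist_smul hr_ne])

/-- If a continuous map on the closed unit disk, injective there,
satisfies the AS condition on the open disk with modulus δ(ε,t), then the same
AS inequality holds (with the same modulus) for points on the unit circle. -/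
theorem as_boundary_extension (f : ℂ → ℂ)
    (hf_cont : ContinuousOn f (closedBall (0:ℂ) 1))
    (hf_inj : Set.InjOn f (closedBall (0:ℂ) 1))
    (δ : ℝ → ℝ → ℝ)
    (hδpos : ∀ ε > (0:ℝ), ∀ t > (0:ℝ), 0 < δ ε t)
    (hAS : ∀ ε > (0:ℝ), ∀ t > (0:ℝ),
      ∀ x ∈ ball (0:ℂ) 1, ∀ a ∈ ball (0:ℂ) 1, ∀ b ∈ ball (0:ℂ) 1,
        x ≠ a → x ≠ b → a ≠ b →
        (∃ c : ℂ, x ∈ ball c (δ ε t) ∧ a ∈ ball c (δ ε t) ∧ b ∈ ball c (δ ε t)) →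
        dist x a / dist x b ≤ t →
        dist (f x) (f a) / dist (f x) (f b) ≤ (1 + ε) * t) :
    ∀ ε > (0:ℝ), ∀ t > (0:ℝ),
      ∀ x ∈ sphere (0:ℂ) 1, ∀ a ∈ sphere (0:ℂ) 1, ∀ b ∈ sphere (0:ℂ) 1,
        x ≠ a → x ≠ b → a ≠ b →
        (∃ c : ℂ, x ∈ ball c (δ ε t) ∧ a ∈ ball c (δ ε t) ∧ b ∈ ball c (δ ε t)) →
        dist x a / dist x b ≤ t →
        dist (f x) (f a) / dist (f x) (f b) ≤ (1 + ε) * t :=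
  as_boundary_extension_general f hf_cont hf_inj δ hAS
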